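/- arXiv:0903.2226 — 3 statements merged into one kernel-verified Lean document; each statement's English description precedes it below -/
import Mathlib

section
/- Let X and Y be independent rate-1 exponential random variables, let α ≥ 2 and 0 < r ≤ 1. Then lim_{ρ→∞} log P[ρ^α Y < (ρ^r − 1)(1 + ρX)] / log ρ = −(α−1−r). (This is the claim P(O_21) ≐ SNR^{−(α−1−r_2)^+} for α ≥ 2, where O_21 = {(h_11,h_21) : log₂(1 + SNR^α|h_21|²/(1+SNR|h_11|²)) < r_2 log₂ SNR} is the outage event of decoding the interfering transmitter at receiver 1 while treating the intended signal as noise.) -/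
open MeasureTheory ProbabilityTheory Filter Real Set Topology

/-! Put `a = ρ^α`, `c = ρ^r - 1` and `L = r + 1 - α ≤ 0`. The event contains `{X > 1, Y ≤ cρ/a}`,
whose probability is `≍ cρ/a ≍ ρ^L` because the exponential CDF is linear near `0`. It is contained
in `{X > α log ρ} ∪ {Y ≤ c (1 + αρ log ρ)/a}`, whose probability is `O(log ρ · ρ^L)`. The factor
`log ρ` disappears after taking `log` and dividing by `log ρ`. -/

lemma mul_exp_neg_le_one_sub_exp_neg (b : ℝ) : b * exp (-b) ≤ 1 - exp (-b) := by
  have h := mul_le_mul_of_nonneg_right (add_one_le_exp b) (exp_pos (-b)).le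
  rw [add_mul, ← exp_add, add_neg_cancel, exp_zero] at h
  linarith

lemma tendsto_log_div_log_of_le_of_le {f : ℝ → ℝ} {L C D : ℝ} (hC : 0 < C) (hD : 0 < D)
    (hlow : ∀ᶠ ρ in atTop, C * ρ ^ L ≤ f ρ) (hup : ∀ᶠ ρ in atTop, f ρ ≤ D * log ρ * ρ ^ L) :
    Tendsto (fun ρ => log (f ρ) / log ρ) atTop (𝓝 L) := by
  have hinv : Tendsto (fun ρ : ℝ => (log ρ)⁻¹) atTop (𝓝 0) :=
    tendsto_log_atTop.inv_tendsto_atTop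
  have hloglog : Tendsto (fun ρ : ℝ => log (log ρ) / log ρ) atTop (𝓝 0) :=
    isLittleO_log_id_atTop.tendsto_div_nhds_zero.comp tendsto_log_atTop
  have hlowT : Tendsto (fun ρ : ℝ => L + log C * (log ρ)⁻¹) atTop (𝓝 L) := by
    simpa using (hinv.const_mul (log C)).const_add L
  have hupT : Tendsto (fun ρ : ℝ => L + (log D * (log ρ)⁻¹ + log (log ρ) / log ρ))
      atTop (𝓝 L) := by
    simpa using ((hinv.const_mul (log D)).add hloglog).const_add L
  refine tendsto_of_tendsto_of_tendsto_of_le_of_le' hlowT hupT ?_ ?_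
  · filter_upwards [hlow, eventually_gt_atTop 1] with ρ hρ hρ1
    have hlogρ := log_pos hρ1
    have hCρ : 0 < C * ρ ^ L := by positivity
    rw [le_div_iff₀ hlogρ]
    calc (L + log C * (log ρ)⁻¹) * log ρ = log (C * ρ ^ L) := by
          rw [log_mul hC.ne' (rpow_pos_of_pos (by linarith) L).ne', log_rpow (by linarith)]
          field_simp; ring
      _ ≤ log (f ρ) := log_le_log hCρ hρ
  · filter_upwards [hlow, hup, eventually_gt_atTop 1] with ρ hρl hρu hρ1
    have hlogρ := log_pos hρ1
    have hCρ : 0 < C * ρ ^ L := by positivity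
    rw [div_le_iff₀ hlogρ]
    calc log (f ρ) ≤ log (D * log ρ * ρ ^ L) := log_le_log (hCρ.trans_le hρl) hρu
      _ = (L + (log D * (log ρ)⁻¹ + log (log ρ) / log ρ)) * log ρ := by
          rw [log_mul (by positivity) (by positivity), log_mul hD.ne' hlogρ.ne',
            log_rpow (by linarith)]
          field_simp; ring

lemma rpow_mul_self_div_rpow {ρ : ℝ} (hρ : 0 < ρ) (r α : ℝ) :
    ρ ^ r * ρ / ρ ^ α = ρ ^ (r + 1 - α) := by
  rw [rpow_sub hρ, rpow_add_one hρ.ne']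

section ExponentialPair

variable {Ω : Type*} [MeasurableSpace Ω] {P : Measure Ω} [IsProbabilityMeasure P] {X Y : Ω → ℝ}

omit [IsProbabilityMeasure P] in
lemma measureReal_preimage_Iic_of_map_eq_expMeasure (hYm : Measurable Y)
    (hY : P.map Y = expMeasure 1) {b : ℝ} (hb : 0 ≤ b) :
    P.real (Y ⁻¹' Iic b) = 1 - exp (-b) := by
  have := isProbabilityMeasure_expMeasure one_pos
  rw [← map_measureReal_apply hYm measurableSet_Iic, hY, ← cdf_eq_real,
    cdf_expMeasure_eq one_pos, if_pos hb, one_mul]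

lemma measureReal_preimage_Ioi_of_map_eq_expMeasure (hXm : Measurable X)
    (hX : P.map X = expMeasure 1) {t : ℝ} (ht : 0 ≤ t) :
    P.real (X ⁻¹' Ioi t) = exp (-t) := by
  rw [← compl_Iic, preimage_compl, probReal_compl_eq_one_sub (hXm measurableSet_Iic),
    measureReal_preimage_Iic_of_map_eq_expMeasure hXm hX ht, sub_sub_cancel]

variable (hXm : Measurable X) (hYm : Measurable Y)
  (hX : P.map X = expMeasure 1) (hY : P.map Y = expMeasure 1)
include hXm hYm hX hY

lemma exp_neg_two_mul_le_measureReal_lt (hindep : IndepFun X Y P) {a c s : ℝ}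
    (ha : 0 < a) (hc : 0 < c) (hs : 0 ≤ s) (hb : c * s / a ≤ 1) :
    exp (-2) * (c * s / a) ≤ P.real {ω | a * Y ω < c * (1 + s * X ω)} := by
  set b := c * s / a
  have hb0 : 0 ≤ b := by positivity
  have hsub : X ⁻¹' Ioi 1 ∩ Y ⁻¹' Iic b ⊆ {ω | a * Y ω < c * (1 + s * X ω)} := by
    rintro ω ⟨hx : 1 < X ω, hy : Y ω ≤ b⟩
    have hcs : a * b = c * s := mul_div_cancel₀ _ ha.ne'
    have : a * Y ω ≤ c * s := hcs ▸ mul_le_mul_of_nonneg_left hy ha.le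
    have : s ≤ s * X ω := le_mul_of_one_le_right hs hx.le
    have : c * s < c * (1 + s * X ω) := mul_lt_mul_of_pos_left (by linarith) hc
    show a * Y ω < c * (1 + s * X ω)
    linarith
  have hprod : P.real (X ⁻¹' Ioi 1 ∩ Y ⁻¹' Iic b) = exp (-1) * (1 - exp (-b)) := by
    rw [measureReal_def, hindep.measure_inter_preimage_eq_mul _ _ measurableSet_Ioi
      measurableSet_Iic, ENNReal.toReal_mul, ← measureReal_def, ← measureReal_def,
      measureReal_preimage_Ioi_of_map_eq_expMeasure hXm hX zero_le_one,
      measureReal_preimage_Iic_of_map_eq_expMeasure hYm hY hb0]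
  calc exp (-2) * b = exp (-1) * (b * exp (-1)) := by
        rw [show (-2 : ℝ) = -1 + -1 by norm_num, exp_add]; ring
    _ ≤ exp (-1) * (1 - exp (-b)) := by
        gcongr
        exact (mul_le_mul_of_nonneg_left (exp_le_exp.2 (by linarith)) hb0).trans
          (mul_exp_neg_le_one_sub_exp_neg b)
    _ = P.real (X ⁻¹' Ioi 1 ∩ Y ⁻¹' Iic b) := hprod.symm
    _ ≤ _ := measureReal_mono hsub

lemma measureReal_lt_le_exp_neg_add {a c s t : ℝ} (ha : 0 < a) (hc : 0 ≤ c) (hs : 0 ≤ s)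
    (ht : 0 ≤ t) :
    P.real {ω | a * Y ω < c * (1 + s * X ω)} ≤ exp (-t) + c * (1 + s * t) / a := by
  set u := c * (1 + s * t) / a
  have hsub : {ω | a * Y ω < c * (1 + s * X ω)} ⊆ X ⁻¹' Ioi t ∪ Y ⁻¹' Iic u := by
    intro ω (hω : a * Y ω < c * (1 + s * X ω))
    by_contra! hout
    simp only [mem_union, mem_preimage, mem_Ioi, mem_Iic, not_or, not_lt, not_le] at hout
    obtain ⟨hxt, hyu⟩ := hout
    rw [div_lt_iff₀ ha] at hyu
    have : c * (1 + s * X ω) ≤ c * (1 + s * t) := by gcongr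
    linarith
  calc P.real {ω | a * Y ω < c * (1 + s * X ω)}
      ≤ P.real (X ⁻¹' Ioi t) + P.real (Y ⁻¹' Iic u) :=
        (measureReal_mono hsub).trans (measureReal_union_le _ _)
    _ = exp (-t) + (1 - exp (-u)) := by
        rw [measureReal_preimage_Ioi_of_map_eq_expMeasure hXm hX ht,
          measureReal_preimage_Iic_of_map_eq_expMeasure hYm hY (by positivity)]
    _ ≤ exp (-t) + u := by linarith [one_sub_le_exp_neg u]

lemma eventually_le_measureReal_outage (hindep : IndepFun X Y P) {α r : ℝ} (hr : 0 < r)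
    (hrα : r + 1 ≤ α) :
    ∀ᶠ ρ in atTop, exp (-2) / 2 * ρ ^ (r + 1 - α) ≤
      P.real {ω | ρ ^ α * Y ω < (ρ ^ r - 1) * (1 + ρ * X ω)} := by
  filter_upwards [eventually_ge_atTop 1, (tendsto_rpow_atTop hr).eventually_ge_atTop 2]
    with ρ hρ hρr
  have hρ0 : 0 < ρ := by linarith
  have hρα : 0 < ρ ^ α := rpow_pos_of_pos hρ0 α
  have hb : (ρ ^ r - 1) * ρ / ρ ^ α ≤ ρ ^ (r + 1 - α) := by
    rw [← rpow_mul_self_div_rpow hρ0]; gcongr; linarith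
  have hL : ρ ^ (r + 1 - α) ≤ 1 := rpow_le_one_of_one_le_of_nonpos hρ (by linarith)
  calc exp (-2) / 2 * ρ ^ (r + 1 - α) = exp (-2) * (ρ ^ r / 2 * ρ / ρ ^ α) := by
        rw [← rpow_mul_self_div_rpow hρ0]; ring
    _ ≤ exp (-2) * ((ρ ^ r - 1) * ρ / ρ ^ α) := by gcongr; linarith
    _ ≤ _ := exp_neg_two_mul_le_measureReal_lt hXm hYm hX hY hindep hρα (by linarith) hρ0.le
        (hb.trans hL)

lemma eventually_measureReal_outage_le {α r : ℝ} (hα : 0 ≤ α) (hr : 0 ≤ r) :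
    ∀ᶠ ρ in atTop, P.real {ω | ρ ^ α * Y ω < (ρ ^ r - 1) * (1 + ρ * X ω)} ≤
      (2 + α) * log ρ * ρ ^ (r + 1 - α) := by
  filter_upwards [eventually_ge_atTop (exp 1)] with ρ hρ
  have hρ1 : 1 < ρ := (one_lt_exp_iff.2 one_pos).trans_le hρ
  have hρ0 : 0 < ρ := by linarith
  have hlog : 1 ≤ log ρ := (le_log_iff_exp_le hρ0).2 hρ
  have hρα : 0 < ρ ^ α := rpow_pos_of_pos hρ0 α
  have hρr : 1 ≤ ρ ^ r := one_le_rpow hρ1.le hr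
  have hρL : 0 < ρ ^ (r + 1 - α) := rpow_pos_of_pos hρ0 _
  have hexp : exp (-(α * log ρ)) ≤ log ρ * ρ ^ (r + 1 - α) := by
    calc exp (-(α * log ρ)) = ρ ^ (-α) := by rw [rpow_def_of_pos hρ0]; ring_nf
      _ ≤ ρ ^ (r + 1 - α) := rpow_le_rpow_of_exponent_le hρ1.le (by linarith)
      _ ≤ log ρ * ρ ^ (r + 1 - α) := le_mul_of_one_le_left hρL.le hlog
  have hsecond : (ρ ^ r - 1) * (1 + ρ * (α * log ρ)) / ρ ^ α ≤
      (1 + α) * log ρ * ρ ^ (r + 1 - α) := by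
    calc (ρ ^ r - 1) * (1 + ρ * (α * log ρ)) / ρ ^ α
        ≤ ρ ^ r * ((1 + α) * ρ * log ρ) / ρ ^ α := by
          have : 1 ≤ ρ * log ρ := one_le_mul_of_one_le_of_one_le hρ1.le hlog
          gcongr
          · linarith
          · linarith
      _ = (1 + α) * log ρ * ρ ^ (r + 1 - α) := by
          rw [← rpow_mul_self_div_rpow hρ0]; ring
  calc P.real {ω | ρ ^ α * Y ω < (ρ ^ r - 1) * (1 + ρ * X ω)}
      ≤ exp (-(α * log ρ)) + (ρ ^ r - 1) * (1 + ρ * (α * log ρ)) / ρ ^ α :=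
        measureReal_lt_le_exp_neg_add hXm hYm hX hY hρα (by linarith) hρ0.le
          (by positivity)
    _ ≤ (2 + α) * log ρ * ρ ^ (r + 1 - α) := by linarith

end ExponentialPair

/-- Outage exponent of decoding the interferer while treating the intended signal as
noise, under very strong interference `α ≥ 2`:
`P[ρ^α Y < (ρ^r − 1)(1 + ρX)] ≐ ρ^{-(α−1−r)}`. -/
theorem stmt_1 {Ω : Type*} [MeasurableSpace Ω] (P : Measure Ω) [IsProbabilityMeasure P]
    (X Y : Ω → ℝ) (hXm : Measurable X) (hYm : Measurable Y)
    (hX : Measure.map X P = expMeasure 1) (hY : Measure.map Y P = expMeasure 1)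
    (hindep : IndepFun X Y P)
    (α r : ℝ) (hα : 2 ≤ α) (hr0 : 0 < r) (hr1 : r ≤ 1) :
    Tendsto (fun ρ : ℝ =>
        Real.log (P {ω | ρ ^ α * Y ω < (ρ ^ r - 1) * (1 + ρ * X ω)}).toReal / Real.log ρ)
      atTop (nhds (-(α - 1 - r))) := by
  rw [show -(α - 1 - r) = r + 1 - α by ring]
  exact tendsto_log_div_log_of_le_of_le (by positivity) (by linarith)
    (eventually_le_measureReal_outage hXm hYm hX hY hindep hr0 (by linarith))
    (eventually_measureReal_outage_le hXm hYm hX hY (by linarith) hr0.le)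
end

section
/- Let X and Y be independent rate-1 exponential random variables and let a ≥ 0, b ≥ 0, r > 0 be real numbers. Then lim_{ρ→∞} log P[ρ^a X < (ρ^r − 1)(1 + ρ^b Y)] / log ρ = −(a − b − r)^+. (General form of the outage exponent for decoding one signal, received at power ρ^a, over a fading channel while treating another signal, received at power ρ^b, as noise, at multiplexing rate r; it underlies the outage exponents appearing in Theorems 1 and 2.) -/
/-!
Write `A = ρ^a`, `B = ρ^b`, `R = ρ^r`. The outage event `{A X < (R - 1)(1 + B Y)}` contains
`{X ≤ s} ∩ {Y > t}` and lies in `{X ≤ s'} ∪ {Y > t}` whenever `A s ≤ (R - 1)(1 + B t) ≤ A s'`,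
so the exponential tails bound its probability below by `(1 - e^{-s}) e^{-t}` and above by
`s' + e^{-t}`.
Taking `t = 1`, `s = min ((R - 1)(1 + B)/A) 1` below and `t = a log ρ` above gives
`c ρ^e ≤ P ≤ ρ^e (2 + a log ρ)` with `e = min (b + r - a) 0`, and the logarithmic factor disappears
at the scale `log ρ`.
-/

open MeasureTheory ProbabilityTheory Filter Real Set Topology

lemma Real.rpow_min_of_one_le {ρ : ℝ} (hρ : 1 ≤ ρ) (x y : ℝ) :
    ρ ^ min x y = min (ρ ^ x) (ρ ^ y) :=
  (Real.monotone_rpow_of_base_ge_one hρ).map_min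

lemma half_le_one_sub_exp_neg {x : ℝ} (h0 : 0 ≤ x) (h1 : x ≤ 1) : x / 2 ≤ 1 - rexp (-x) := by
  have hexp : rexp (-x) ≤ (1 + x)⁻¹ := by
    rw [Real.exp_neg]
    exact inv_anti₀ (by linarith) (by linarith [Real.add_one_le_exp x])
  have hinv : (1 + x)⁻¹ ≤ 1 - x / 2 := by
    rw [inv_le_iff_one_le_mul₀ (by linarith)]
    nlinarith
  linarith

lemma tendsto_log_add_mul_log_div_log {c a : ℝ} (hc : 1 ≤ c) (ha : 0 ≤ a) :
    Tendsto (fun ρ ↦ log (c + a * log ρ) / log ρ) atTop (𝓝 0) := by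
  suffices h : Tendsto (fun t ↦ log (c + a * t) / t) atTop (𝓝 0) from
    h.comp Real.tendsto_log_atTop
  have hub : Tendsto (fun t ↦ log (c + a) / t + log t / t) atTop (𝓝 0) := by
    simpa using (tendsto_const_nhds.div_atTop tendsto_id).add
      Real.isLittleO_log_id_atTop.tendsto_div_nhds_zero
  refine tendsto_of_tendsto_of_tendsto_of_le_of_le' tendsto_const_nhds hub ?_ ?_
  all_goals filter_upwards [eventually_ge_atTop (1 : ℝ)] with t ht
  · have : 0 ≤ log (c + a * t) := Real.log_nonneg (by nlinarith)
    positivity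
  · have hlog : log (c + a * t) ≤ log (c + a) + log t := by
      rw [← Real.log_mul (by linarith) (by linarith)]
      exact Real.log_le_log (by nlinarith) (by nlinarith)
    rw [← add_div]
    exact div_le_div_of_nonneg_right hlog (by linarith)

lemma tendsto_log_div_log_of_le_of_le_s2 {f g : ℝ → ℝ} {c e : ℝ} (hc : 0 < c)
    (hg : Tendsto (fun ρ ↦ log (g ρ) / log ρ) atTop (𝓝 0))
    (hlow : ∀ᶠ ρ in atTop, c * ρ ^ e ≤ f ρ) (hup : ∀ᶠ ρ in atTop, f ρ ≤ ρ ^ e * g ρ) :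
    Tendsto (fun ρ ↦ log (f ρ) / log ρ) atTop (𝓝 e) := by
  have hlow' : Tendsto (fun ρ ↦ log c / log ρ + e) atTop (𝓝 e) := by
    simpa using (tendsto_const_nhds.div_atTop Real.tendsto_log_atTop).add_const e
  have hup' : Tendsto (fun ρ ↦ e + log (g ρ) / log ρ) atTop (𝓝 e) := by
    simpa using hg.const_add e
  refine tendsto_of_tendsto_of_tendsto_of_le_of_le' hlow' hup' ?_ ?_
  all_goals filter_upwards [hlow, hup, eventually_gt_atTop 1] with ρ hl hu hρ
  all_goals
    have hlogρ : 0 < log ρ := Real.log_pos hρ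
    have hpow : 0 < ρ ^ e := Real.rpow_pos_of_pos (by linarith) e
    have hf : 0 < f ρ := lt_of_lt_of_le (by positivity) hl
    have hlog_pow : log (ρ ^ e) = e * log ρ := Real.log_rpow (by linarith) e
  · rw [div_add' _ _ _ hlogρ.ne', div_le_div_iff_of_pos_right hlogρ]
    have := Real.log_le_log (by positivity) hl
    rwa [Real.log_mul hc.ne' hpow.ne', hlog_pow] at this
  · have hgpos : 0 < g ρ := pos_of_mul_pos_right (hf.trans_le hu) hpow.le
    rw [add_div' _ _ _ hlogρ.ne', div_le_div_iff_of_pos_right hlogρ]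
    have := Real.log_le_log hf hu
    rwa [Real.log_mul hpow.ne' hgpos.ne', hlog_pow] at this

lemma Real.rpow_min_add_sub_zero {ρ : ℝ} (hρ : 1 ≤ ρ) (a b r : ℝ) :
    ρ ^ min (b + r - a) 0 = min (ρ ^ r * ρ ^ b / ρ ^ a) 1 := by
  have hρ0 : 0 < ρ := by linarith
  rw [Real.rpow_min_of_one_le hρ, Real.rpow_zero, add_comm b, Real.rpow_sub hρ0,
    Real.rpow_add hρ0]

lemma expMeasure_one_real_Iic {t : ℝ} (ht : 0 ≤ t) :
    (expMeasure 1).real (Iic t) = 1 - rexp (-t) := by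
  have := isProbabilityMeasure_expMeasure one_pos
  rw [← cdf_eq_real, cdf_expMeasure_eq one_pos, if_pos ht, one_mul]

lemma expMeasure_one_real_Ioi {t : ℝ} (ht : 0 ≤ t) :
    (expMeasure 1).real (Ioi t) = rexp (-t) := by
  have := isProbabilityMeasure_expMeasure one_pos
  rw [← compl_Iic, probReal_compl_eq_one_sub measurableSet_Iic, expMeasure_one_real_Iic ht]
  ring

section Outage

variable {Ω : Type*} {X Y : Ω → ℝ}

lemma inter_subset_outage_of_mul_le {A B R s t : ℝ} (hA : 0 < A) (hB : 0 < B) (hR : 1 < R)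
    (h : A * s ≤ (R - 1) * (1 + B * t)) :
    {ω | X ω ≤ s} ∩ {ω | t < Y ω} ⊆ {ω | A * X ω < (R - 1) * (1 + B * Y ω)} := by
  rintro ω ⟨hx, hy⟩
  simp only [mem_ofPred_eq] at hx hy ⊢
  nlinarith [mul_le_mul_of_nonneg_left hx hA.le, mul_lt_mul_of_pos_left hy hB]

lemma outage_subset_union_of_le_mul {A B R s t : ℝ} (hA : 0 < A) (hB : 0 ≤ B) (hR : 1 ≤ R)
    (h : (R - 1) * (1 + B * t) ≤ A * s) :
    {ω | A * X ω < (R - 1) * (1 + B * Y ω)} ⊆ {ω | X ω ≤ s} ∪ {ω | t < Y ω} := by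
  intro ω hω
  simp only [mem_ofPred_eq, mem_union] at hω ⊢
  refine (le_or_gt (Y ω) t).imp (fun hy ↦ ?_) id
  refine le_of_lt ((mul_lt_mul_iff_right₀ hA).mp ?_)
  nlinarith [mul_le_mul_of_nonneg_left hy hB]

end Outage

section OutageProbability

variable {Ω : Type*} [MeasurableSpace Ω] {P : Measure Ω} {X Y : Ω → ℝ}

lemma real_le_of_map_eq_expMeasure (hXm : Measurable X) (hX : P.map X = expMeasure 1)
    {s : ℝ} (hs : 0 ≤ s) : P.real {ω | X ω ≤ s} = 1 - rexp (-s) := by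
  rw [← expMeasure_one_real_Iic hs, ← hX, map_measureReal_apply hXm measurableSet_Iic]
  rfl

lemma real_lt_of_map_eq_expMeasure (hYm : Measurable Y) (hY : P.map Y = expMeasure 1)
    {t : ℝ} (ht : 0 ≤ t) : P.real {ω | t < Y ω} = rexp (-t) := by
  rw [← expMeasure_one_real_Ioi ht, ← hY, map_measureReal_apply hYm measurableSet_Ioi]
  rfl

variable (hXm : Measurable X) (hYm : Measurable Y)
  (hX : P.map X = expMeasure 1) (hY : P.map Y = expMeasure 1)
include hXm hYm hX hY

lemma mul_exp_neg_le_real_outage [IsFiniteMeasure P] (hindep : IndepFun X Y P)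
    {A B R s t : ℝ} (hA : 0 < A) (hB : 0 < B) (hR : 1 < R) (hs : 0 ≤ s) (ht : 0 ≤ t)
    (h : A * s ≤ (R - 1) * (1 + B * t)) :
    (1 - rexp (-s)) * rexp (-t) ≤ P.real {ω | A * X ω < (R - 1) * (1 + B * Y ω)} := by
  have hprod : P.real ({ω | X ω ≤ s} ∩ {ω | t < Y ω}) = (1 - rexp (-s)) * rexp (-t) := by
    rw [← real_le_of_map_eq_expMeasure hXm hX hs, ← real_lt_of_map_eq_expMeasure hYm hY ht,
      measureReal_def, measureReal_def, measureReal_def, ← ENNReal.toReal_mul]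
    exact congrArg ENNReal.toReal
      (hindep.measure_inter_preimage_eq_mul _ _ measurableSet_Iic measurableSet_Ioi)
  rw [← hprod]
  exact measureReal_mono (inter_subset_outage_of_mul_le hA hB hR h)

lemma real_outage_le_add_exp_neg [IsFiniteMeasure P]
    {A B R s t : ℝ} (hA : 0 < A) (hB : 0 ≤ B) (hR : 1 ≤ R) (hs : 0 ≤ s) (ht : 0 ≤ t)
    (h : (R - 1) * (1 + B * t) ≤ A * s) :
    P.real {ω | A * X ω < (R - 1) * (1 + B * Y ω)} ≤ (1 - rexp (-s)) + rexp (-t) := by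
  rw [← real_le_of_map_eq_expMeasure hXm hX hs, ← real_lt_of_map_eq_expMeasure hYm hY ht]
  exact (measureReal_mono (outage_subset_union_of_le_mul hA hB hR h)).trans
    (measureReal_union_le _ _)

variable {a b r : ℝ}

lemma eventually_rpow_le_real_outage [IsFiniteMeasure P] (hindep : IndepFun X Y P)
    (hb : 0 ≤ b) (hr : 0 < r) :
    ∀ᶠ ρ in atTop, rexp (-1) / 4 * ρ ^ min (b + r - a) 0 ≤
      P.real {ω | ρ ^ a * X ω < (ρ ^ r - 1) * (1 + ρ ^ b * Y ω)} := by
  filter_upwards [eventually_gt_atTop 1, (tendsto_rpow_atTop hr).eventually_ge_atTop 2]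
    with ρ hρ hR
  have hρ0 : 0 < ρ := by linarith
  rw [Real.rpow_min_add_sub_zero hρ.le]
  set A := ρ ^ a
  set B := ρ ^ b
  set R := ρ ^ r
  have hA : 0 < A := Real.rpow_pos_of_pos hρ0 a
  have hB : 1 ≤ B := Real.one_le_rpow hρ.le hb
  set s := min ((R - 1) * (1 + B) / A) 1
  have hs0 : 0 ≤ s :=
    le_min (div_nonneg (mul_nonneg (by linarith) (by linarith)) hA.le) zero_le_one
  have hAs : A * s ≤ (R - 1) * (1 + B * 1) := by
    rw [mul_one, ← mul_div_cancel₀ ((R - 1) * (1 + B)) hA.ne']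
    exact mul_le_mul_of_nonneg_left (min_le_left _ _) hA.le
  have hs : min (R * B / A) 1 / 2 ≤ s := by
    refine le_min ?_ (by linarith [min_le_right (R * B / A) 1])
    refine (div_le_div_of_nonneg_right (min_le_left _ _) zero_le_two).trans ?_
    rw [div_right_comm, div_le_div_iff_of_pos_right hA]
    nlinarith
  calc rexp (-1) / 4 * min (R * B / A) 1
      = rexp (-1) * (min (R * B / A) 1 / 2 / 2) := by ring
    _ ≤ rexp (-1) * (s / 2) := by gcongr
    _ ≤ (1 - rexp (-s)) * rexp (-1) := by
      rw [mul_comm]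
      exact mul_le_mul_of_nonneg_right (half_le_one_sub_exp_neg hs0 (min_le_right _ _))
        (Real.exp_nonneg _)
    _ ≤ _ := mul_exp_neg_le_real_outage hXm hYm hX hY hindep hA (by linarith) (by linarith)
      hs0 zero_le_one hAs

lemma eventually_real_outage_le_rpow [IsProbabilityMeasure P] (ha : 0 ≤ a) (hb : 0 ≤ b)
    (hr : 0 < r) :
    ∀ᶠ ρ in atTop, P.real {ω | ρ ^ a * X ω < (ρ ^ r - 1) * (1 + ρ ^ b * Y ω)} ≤
      ρ ^ min (b + r - a) 0 * (2 + a * log ρ) := by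
  filter_upwards [eventually_gt_atTop 1] with ρ hρ
  have hρ0 : 0 < ρ := by linarith
  have ht : 0 ≤ a * log ρ := mul_nonneg ha (Real.log_pos hρ).le
  rw [Real.rpow_min_add_sub_zero hρ.le, min_mul_of_nonneg _ _ (by linarith)]
  set t := a * log ρ
  have hexp : rexp (-t) = (ρ ^ a)⁻¹ := by
    rw [Real.exp_neg, Real.rpow_def_of_pos hρ0, mul_comm]
  set A := ρ ^ a
  set B := ρ ^ b
  set R := ρ ^ r
  have hA : 0 < A := Real.rpow_pos_of_pos hρ0 a
  have hB : 1 ≤ B := Real.one_le_rpow hρ.le hb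
  have hR : 1 ≤ R := Real.one_le_rpow hρ.le hr.le
  set s := (R - 1) * (1 + B * t) / A
  have hs0 : 0 ≤ s := by unfold s; have := mul_nonneg (sub_nonneg.2 hR) ht; positivity
  have hAs : (R - 1) * (1 + B * t) ≤ A * s := (mul_div_cancel₀ _ hA.ne').ge
  refine le_min ?_ (measureReal_le_one.trans (by linarith))
  calc P.real {ω | A * X ω < (R - 1) * (1 + B * Y ω)}
      ≤ (1 - rexp (-s)) + rexp (-t) :=
        real_outage_le_add_exp_neg hXm hYm hX hY hA (by linarith) hR hs0 ht hAs
    _ ≤ s + A⁻¹ := by linarith [Real.one_sub_le_exp_neg s]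
    _ = ((R - 1) * (1 + B * t) + 1) / A := by unfold s; field_simp
    _ ≤ R * B / A * (2 + t) := by
      rw [div_mul_eq_mul_div]
      exact div_le_div_of_nonneg_right (by nlinarith [mul_nonneg (sub_nonneg.2 hB) ht]) hA.le

end OutageProbability

/-- General outage exponent for decoding a signal received at power `ρ^a` while
treating a signal received at power `ρ^b` as noise, at multiplexing rate `r`:
`P[ρ^a X < (ρ^r − 1)(1 + ρ^b Y)] ≐ ρ^{-(a−b−r)^+}`. -/
theorem stmt_2 {Ω : Type*} [MeasurableSpace Ω] (P : Measure Ω) [IsProbabilityMeasure P]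
    (X Y : Ω → ℝ) (hXm : Measurable X) (hYm : Measurable Y)
    (hX : Measure.map X P = expMeasure 1) (hY : Measure.map Y P = expMeasure 1)
    (hindep : IndepFun X Y P)
    (a b r : ℝ) (ha : 0 ≤ a) (hb : 0 ≤ b) (hr : 0 < r) :
    Tendsto (fun ρ : ℝ =>
        Real.log (P {ω | ρ ^ a * X ω < (ρ ^ r - 1) * (1 + ρ ^ b * Y ω)}).toReal / Real.log ρ)
      atTop (nhds (-max (a - b - r) 0)) := by
  have hexponent : -max (a - b - r) 0 = min (b + r - a) 0 := by
    rw [← min_neg_neg, neg_zero]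
    ring_nf
  rw [hexponent]
  exact tendsto_log_div_log_of_le_of_le_s2 (by positivity)
    (tendsto_log_add_mul_log_div_log one_le_two ha)
    (eventually_rpow_le_real_outage hXm hYm hX hY hindep hb hr)
    (eventually_real_outage_le_rpow hXm hYm hX hY ha hb hr)
end

section
/- Let X and Y be independent rate-1 exponential random variables, let α ≥ 2, r ∈ (0,1] and ε > 0, and let δ : ℝ → ℝ satisfy δ(ρ) ≥ ρ^{−r+ε} for all sufficiently large ρ. Define g(ρ) = P[ρ^α Y < (ρ^r − 1)(1 + ρX)] + ρ^r · Q(√(ρ^r δ(ρ)/2)). Then limsup_{ρ→∞} log g(ρ)/log ρ ≤ −(α − 1 − r). (This is the bound P(E_21) ⩽̇ P(O_21) ≐ SNR^{−(α−1−r_2)^+} on the average error probability of decoding the interfering transmitter at receiver 1 while treating the intended signal as noise, valid for codebooks of size SNR^{r_2} whose minimum squared distance satisfies |Δx_2|² ⩾̇ SNR^{−r_2+ε}.) -/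
open MeasureTheory ProbabilityTheory Filter Real

/-- Tail function of a standard real Gaussian: `Q t = P[Z ≥ t]`, `Z ~ N(0,1)`. -/
noncomputable def gaussQ (t : ℝ) : ℝ := ((gaussianReal 0 1) (Set.Ici t)).toReal

/-!
On the outage event, either `X > T := ρ ^ η`, which has probability `exp (-ρ ^ η)`, or
`Y < ρ ^ (r - α) * (1 + ρ * T)`, which has probability at most `ρ ^ (r - α + 1 + η)`. The
Chernoff bound `Q t ≤ exp (-t ^ 2 / 2)` and `ρ ^ r * δ ρ ≥ ρ ^ ε` make the union-bound term decay
faster than any power of `ρ`. Since `limsup` of a real function that is not bounded below is a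
junk value, we also need the lower bound `g ρ ≥ P[Y ≤ ρ ^ (-α), X ≥ 0] ≥ ρ ^ (-α) / 2`.
-/

open Set Asymptotics

lemma gaussQ_nonneg (t : ℝ) : 0 ≤ gaussQ t := ENNReal.toReal_nonneg

lemma gaussQ_le_exp_neg {t : ℝ} (ht : 0 ≤ t) : gaussQ t ≤ exp (-(t ^ 2 / 2)) := by
  have hChernoff := measure_ge_le_exp_mul_mgf (μ := gaussianReal 0 1) (X := id) t ht
    (integrable_exp_mul_gaussianReal t)
  rw [mgf_id_gaussianReal, ← exp_add] at hChernoff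
  convert hChernoff using 2
  · simp [gaussQ, measureReal_def, Ici]
  · push_cast; ring

lemma exp_neg_mul_rpow_isLittleO_rpow {b s : ℝ} (hb : 0 < b) (hs : 0 < s) (B : ℝ) :
    (fun ρ : ℝ => exp (-(b * ρ ^ s))) =o[atTop] fun ρ => ρ ^ B := by
  refine ((isLittleO_exp_neg_mul_rpow_atTop hb (B / s)).comp_tendsto
    (tendsto_rpow_atTop hs)).congr' (.of_eq (by simp [Function.comp_def])) ?_
  filter_upwards [eventually_ge_atTop 0] with ρ hρ
  simp [← rpow_mul hρ, mul_div_cancel₀ _ hs.ne']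

lemma rpow_mul_gaussQ_isLittleO_rpow {r ε : ℝ} (hε : 0 < ε) {δ : ℝ → ℝ}
    (hδ : ∀ᶠ ρ in atTop, ρ ^ (-r + ε) ≤ δ ρ) (B : ℝ) :
    (fun ρ => ρ ^ r * gaussQ (√(ρ ^ r * δ ρ / 2))) =o[atTop] fun ρ => ρ ^ B := by
  have hdecay : (fun ρ : ℝ => ρ ^ r * exp (-(1 / 4 * ρ ^ ε))) =o[atTop] fun ρ => ρ ^ B := by
    refine ((isBigO_refl (fun ρ : ℝ => ρ ^ r) atTop).mul_isLittleO
      (exp_neg_mul_rpow_isLittleO_rpow (by norm_num) hε (B - r))).congr' .rfl ?_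
    filter_upwards [eventually_gt_atTop 0] with ρ hρ
    simp [← rpow_add hρ]
  refine (IsBigO.of_bound' ?_).trans_isLittleO hdecay
  filter_upwards [hδ, eventually_gt_atTop 0] with ρ hδρ hρ
  have hu : ρ ^ ε / 2 ≤ ρ ^ r * δ ρ / 2 := by
    rw [show ε = r + (-r + ε) by ring, rpow_add hρ]
    gcongr
  have hQ : gaussQ (√(ρ ^ r * δ ρ / 2)) ≤ exp (-(1 / 4 * ρ ^ ε)) := by
    refine (gaussQ_le_exp_neg (sqrt_nonneg _)).trans ?_
    rw [sq_sqrt ((by positivity : (0 : ℝ) ≤ ρ ^ ε / 2).trans hu)]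
    gcongr
    linarith
  rw [norm_of_nonneg (mul_nonneg (by positivity) (gaussQ_nonneg _)),
    norm_of_nonneg (by positivity)]
  gcongr

lemma limsup_log_div_log_le {f : ℝ → ℝ} {a b : ℝ} (hlow : ∀ᶠ ρ in atTop, ρ ^ b ≤ f ρ)
    (hup : ∀ η > 0, f =O[atTop] fun ρ => ρ ^ (a + η)) :
    limsup (fun ρ => log (f ρ) / log ρ) atTop ≤ a := by
  have hcobdd : IsCoboundedUnder (· ≤ ·) atTop (fun ρ => log (f ρ) / log ρ) := by
    refine isCoboundedUnder_le_of_eventually_le atTop (x := b) ?_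
    filter_upwards [hlow, eventually_gt_atTop 1] with ρ hf hρ
    rw [le_div_iff₀ (log_pos hρ), ← log_rpow (by linarith)]
    exact log_le_log (by positivity) hf
  refine le_of_forall_pos_le_add fun η hη => limsup_le_of_le hcobdd ?_
  obtain ⟨C, hC⟩ := (hup (η / 2) (half_pos hη)).bound
  filter_upwards [hC, hlow, (tendsto_rpow_atTop (half_pos hη)).eventually_ge_atTop C,
    eventually_gt_atTop 1] with ρ hCρ hf hρC hρ
  have hρ0 : 0 < ρ := by linarith
  have hfpos : 0 < f ρ := (rpow_pos_of_pos hρ0 b).trans_le hf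
  have hfle : f ρ ≤ ρ ^ (a + η) :=
    calc f ρ ≤ C * ρ ^ (a + η / 2) := by
          simpa [abs_of_pos hfpos, abs_of_pos (rpow_pos_of_pos hρ0 _)] using hCρ
      _ ≤ ρ ^ (η / 2) * ρ ^ (a + η / 2) := by gcongr
      _ = ρ ^ (a + η) := by rw [← rpow_add hρ0]; ring_nf
  rw [div_le_iff₀ (log_pos hρ), ← log_rpow hρ0]
  exact log_le_log hfpos hfle

section ExponentialLaw

variable {Ω : Type*} [MeasurableSpace Ω] {P : Measure Ω} {Y : Ω → ℝ}

lemma measureReal_le_of_map_eq_expMeasure (hYm : Measurable Y)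
    (hY : P.map Y = expMeasure 1) {c : ℝ} (hc : 0 ≤ c) :
    P.real {ω | Y ω ≤ c} = 1 - exp (-c) := by
  have := isProbabilityMeasure_expMeasure one_pos
  have hcdf := cdf_expMeasure_eq one_pos c
  rw [cdf_eq_real, ← hY, map_measureReal_apply hYm measurableSet_Iic, if_pos hc, one_mul] at hcdf
  exact hcdf

lemma measureReal_lt_le_of_map_eq_expMeasure [IsFiniteMeasure P] (hYm : Measurable Y)
    (hY : P.map Y = expMeasure 1) {c : ℝ} (hc : 0 ≤ c) :
    P.real {ω | Y ω < c} ≤ c :=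
  calc P.real {ω | Y ω < c} ≤ P.real {ω | Y ω ≤ c} :=
        measureReal_mono (ofPred_subset_ofPred.2 fun _ => le_of_lt)
    _ = 1 - exp (-c) := measureReal_le_of_map_eq_expMeasure hYm hY hc
    _ ≤ c := by linarith [add_one_le_exp (-c)]

lemma measureReal_gt_of_map_eq_expMeasure [IsProbabilityMeasure P] (hYm : Measurable Y)
    (hY : P.map Y = expMeasure 1) {c : ℝ} (hc : 0 ≤ c) :
    P.real {ω | c < Y ω} = exp (-c) := by
  have hcompl : {ω | c < Y ω} = {ω | Y ω ≤ c}ᶜ := by ext; simp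
  rw [hcompl, probReal_compl_eq_one_sub (measurableSet_le hYm measurable_const),
    measureReal_le_of_map_eq_expMeasure hYm hY hc]
  ring

lemma ae_nonneg_of_map_eq_expMeasure [IsFiniteMeasure P] (hYm : Measurable Y)
    (hY : P.map Y = expMeasure 1) : ∀ᵐ ω ∂P, 0 ≤ Y ω := by
  have := measureReal_lt_le_of_map_eq_expMeasure hYm hY le_rfl
  rw [ae_iff, ← measureReal_eq_zero_iff]
  simp only [not_le]
  exact le_antisymm this measureReal_nonneg

lemma half_le_measureReal_le_of_map_eq_expMeasure (hYm : Measurable Y)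
    (hY : P.map Y = expMeasure 1) {t : ℝ} (ht0 : 0 ≤ t) (ht1 : t ≤ 1) :
    t / 2 ≤ P.real {ω | Y ω ≤ t} := by
  rw [measureReal_le_of_map_eq_expMeasure hYm hY ht0]
  have h : exp (-t) * (1 + t) ≤ 1 := by
    calc exp (-t) * (1 + t) ≤ exp (-t) * exp t := by gcongr; linarith [add_one_le_exp t]
      _ = 1 := by rw [← exp_add]; simp
  nlinarith [exp_pos (-t)]

end ExponentialLaw

section Outage

variable {Ω : Type*} {X Y : Ω → ℝ}

/-- The outage event `O_21` of the paper. -/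
def outageSet (X Y : Ω → ℝ) (α r ρ : ℝ) : Set Ω :=
  {ω | ρ ^ α * Y ω < (ρ ^ r - 1) * (1 + ρ * X ω)}

lemma outageSet_subset {α r ρ T : ℝ} (hρ : 1 ≤ ρ) (hr : 0 ≤ r) (hT : 0 ≤ T) :
    outageSet X Y α r ρ ⊆ {ω | Y ω < ρ ^ (r - α) * (1 + ρ * T)} ∪ {ω | T < X ω} := by
  intro ω (hω : ρ ^ α * Y ω < (ρ ^ r - 1) * (1 + ρ * X ω))
  by_cases hXT : X ω ≤ T
  · left
    have hρr : 1 ≤ ρ ^ r := one_le_rpow hρ hr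
    have hbound : (ρ ^ r - 1) * (1 + ρ * X ω) ≤ ρ ^ r * (1 + ρ * T) := by
      nlinarith [mul_le_mul_of_nonneg_left hXT (zero_le_one.trans hρ)]
    change Y ω < ρ ^ (r - α) * (1 + ρ * T)
    rw [rpow_sub (by linarith), div_mul_eq_mul_div, lt_div_iff₀ (by positivity)]
    linarith
  · exact Or.inr (not_le.1 hXT)

variable [MeasurableSpace Ω] {P : Measure Ω}

lemma measureReal_outageSet_le [IsProbabilityMeasure P] (hXm : Measurable X)
    (hX : P.map X = expMeasure 1) (hYm : Measurable Y) (hY : P.map Y = expMeasure 1)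
    {α r ρ T : ℝ} (hρ : 1 ≤ ρ) (hr : 0 ≤ r) (hT : 0 ≤ T) :
    P.real (outageSet X Y α r ρ) ≤ ρ ^ (r - α) * (1 + ρ * T) + exp (-T) :=
  calc P.real (outageSet X Y α r ρ)
      ≤ P.real {ω | Y ω < ρ ^ (r - α) * (1 + ρ * T)} + P.real {ω | T < X ω} :=
        (measureReal_mono (outageSet_subset hρ hr hT)).trans (measureReal_union_le _ _)
    _ ≤ ρ ^ (r - α) * (1 + ρ * T) + exp (-T) := by
        gcongr
        · exact measureReal_lt_le_of_map_eq_expMeasure hYm hY (by positivity)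
        · exact (measureReal_gt_of_map_eq_expMeasure hXm hX hT).le

lemma half_rpow_neg_le_measureReal_outageSet [IsFiniteMeasure P] (hXm : Measurable X)
    (hX : P.map X = expMeasure 1) (hYm : Measurable Y) (hY : P.map Y = expMeasure 1)
    {α r ρ : ℝ} (hρ : 1 ≤ ρ) (hα : 0 ≤ α) (hρr : 2 < ρ ^ r) :
    ρ ^ (-α) / 2 ≤ P.real (outageSet X Y α r ρ) := by
  have hsub : {ω | Y ω ≤ ρ ^ (-α)} ≤ᵐ[P] outageSet X Y α r ρ := by
    filter_upwards [ae_nonneg_of_map_eq_expMeasure hXm hX] with ω hX0 (hYω : Y ω ≤ ρ ^ (-α))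
    have hρ0 : 0 < ρ := zero_lt_one.trans_le hρ
    calc ρ ^ α * Y ω ≤ ρ ^ α * ρ ^ (-α) := by gcongr
      _ = 1 := by rw [← rpow_add hρ0, add_neg_cancel, rpow_zero]
      _ < (ρ ^ r - 1) * 1 := by linarith
      _ ≤ (ρ ^ r - 1) * (1 + ρ * X ω) := by
        gcongr
        · linarith
        · nlinarith
  calc ρ ^ (-α) / 2 ≤ P.real {ω | Y ω ≤ ρ ^ (-α)} :=
        half_le_measureReal_le_of_map_eq_expMeasure hYm hY (by positivity)
          (rpow_le_one_of_one_le_of_nonpos hρ (by linarith))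
    _ ≤ P.real (outageSet X Y α r ρ) :=
        ENNReal.toReal_mono (measure_ne_top _ _) (measure_mono_ae hsub)

lemma measureReal_outageSet_isBigO [IsProbabilityMeasure P] (hXm : Measurable X)
    (hX : P.map X = expMeasure 1) (hYm : Measurable Y) (hY : P.map Y = expMeasure 1)
    {α r η : ℝ} (hr : 0 ≤ r) (hη : 0 < η) :
    (fun ρ => P.real (outageSet X Y α r ρ)) =O[atTop] fun ρ => ρ ^ (r - α + 1 + η) := by
  have hdom : (fun ρ : ℝ => 2 * ρ ^ (r - α + 1 + η) + exp (-(1 * ρ ^ η)))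
      =O[atTop] fun ρ => ρ ^ (r - α + 1 + η) :=
    ((isBigO_refl _ _).const_mul_left 2).add (exp_neg_mul_rpow_isLittleO_rpow one_pos hη _).isBigO
  refine (IsBigO.of_bound' ?_).trans hdom
  filter_upwards [eventually_ge_atTop 1] with ρ hρ
  have hρ0 : 0 < ρ := by linarith
  have hsplit : ρ ^ (r - α) * (ρ * ρ ^ η) = ρ ^ (r - α + 1 + η) := by
    rw [rpow_add hρ0, rpow_add hρ0, rpow_one, mul_assoc]
  have hsmall : ρ ^ (r - α) ≤ ρ ^ (r - α + 1 + η) := rpow_le_rpow_of_exponent_le hρ (by linarith)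
  rw [norm_of_nonneg measureReal_nonneg, norm_of_nonneg (by positivity), one_mul]
  calc P.real (outageSet X Y α r ρ) ≤ ρ ^ (r - α) * (1 + ρ * ρ ^ η) + exp (-ρ ^ η) :=
        measureReal_outageSet_le hXm hX hYm hY hρ hr (by positivity)
    _ ≤ 2 * ρ ^ (r - α + 1 + η) + exp (-ρ ^ η) := by rw [mul_one_add, hsplit]; linarith

end Outage

theorem stmt_5_general {Ω : Type*} [MeasurableSpace Ω] (P : Measure Ω) [IsProbabilityMeasure P]
    (X Y : Ω → ℝ) (hXm : Measurable X) (hYm : Measurable Y)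
    (hX : Measure.map X P = expMeasure 1) (hY : Measure.map Y P = expMeasure 1)
    (α r ε : ℝ) (hα : 2 ≤ α) (hr0 : 0 < r) (hε : 0 < ε)
    (δ : ℝ → ℝ) (hδ : ∀ᶠ ρ in atTop, (ρ : ℝ) ^ (-r + ε) ≤ δ ρ)
    (g : ℝ → ℝ)
    (hg : ∀ ρ : ℝ, g ρ =
      (P {ω | ρ ^ α * Y ω < (ρ ^ r - 1) * (1 + ρ * X ω)}).toReal
        + ρ ^ r * gaussQ (Real.sqrt (ρ ^ r * δ ρ / 2))) :
    Filter.limsup (fun ρ : ℝ => Real.log (g ρ) / Real.log ρ) atTop ≤ -(α - 1 - r) := by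
  have hg' : g = fun ρ => P.real (outageSet X Y α r ρ) + ρ ^ r * gaussQ (√(ρ ^ r * δ ρ / 2)) :=
    funext hg
  refine limsup_log_div_log_le (b := -α - 1) ?_ fun η hη => ?_
  · filter_upwards [(tendsto_rpow_atTop hr0).eventually_gt_atTop 2, eventually_ge_atTop 2]
      with ρ hρr hρ
    calc ρ ^ (-α - 1) = ρ ^ (-α) / ρ := by rw [rpow_sub (by linarith), rpow_one]
      _ ≤ ρ ^ (-α) / 2 := by gcongr
      _ ≤ P.real (outageSet X Y α r ρ) :=
        half_rpow_neg_le_measureReal_outageSet hXm hX hYm hY (by linarith) (by linarith) hρr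
      _ ≤ g ρ := by
        rw [hg']
        exact le_add_of_nonneg_right (mul_nonneg (by positivity) (gaussQ_nonneg _))
  · rw [hg', show -(α - 1 - r) + η = r - α + 1 + η by ring]
    exact (measureReal_outageSet_isBigO hXm hX hYm hY hr0.le hη).add
      (rpow_mul_gaussQ_isLittleO_rpow hε hδ _).isBigO

/-- `P(E_21) ⩽̇ SNR^{−(α−1−r)}`: the error probability of decoding the interfering
transmitter while treating the intended signal as noise, upper-bounded by the outage
probability plus the union-bound term, has SNR exponent at most `−(α−1−r)` provided
the codebook minimum distance satisfies `δ(ρ) ≥ ρ^{−r+ε}` eventually. -/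
theorem stmt_5 {Ω : Type*} [MeasurableSpace Ω] (P : Measure Ω) [IsProbabilityMeasure P]
    (X Y : Ω → ℝ) (hXm : Measurable X) (hYm : Measurable Y)
    (hX : Measure.map X P = expMeasure 1) (hY : Measure.map Y P = expMeasure 1)
    (hindep : IndepFun X Y P)
    (α r ε : ℝ) (hα : 2 ≤ α) (hr0 : 0 < r) (hr1 : r ≤ 1) (hε : 0 < ε)
    (δ : ℝ → ℝ) (hδ : ∀ᶠ ρ in atTop, (ρ : ℝ) ^ (-r + ε) ≤ δ ρ)
    (g : ℝ → ℝ)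
    (hg : ∀ ρ : ℝ, g ρ =
      (P {ω | ρ ^ α * Y ω < (ρ ^ r - 1) * (1 + ρ * X ω)}).toReal
        + ρ ^ r * gaussQ (Real.sqrt (ρ ^ r * δ ρ / 2))) :
    Filter.limsup (fun ρ : ℝ => Real.log (g ρ) / Real.log ρ) atTop ≤ -(α - 1 - r) :=
  stmt_5_general P X Y hXm hYm hX hY α r ε hα hr0 hε δ hδ g hg
end
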